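/- arXiv:2001.00486 — 2 statements merged into one kernel-verified Lean document; each statement's English description precedes it below -/
import Mathlib

section
/- Performing multiple repairs on the same chain is order-independent when the repairs target distinct blocks and each repair proposal prescribes the full new state: applying repairChain for proposals rp_i (for block i) and rp_j (for block j, i ≠ j) in either order yields the same final chain, provided the proposals' prescribed states are consistent (the later-applied proposal's state recomputation via δ absorbs the earlier change). -/
/-!
`restate` recomputes every state from `s0` and the transaction column alone, so a chain
produced by `restate` is determined by its transactions. After both repairs, in either
order, the transaction column is the original one with positions `i` and `j` overwritten,
and writes to distinct positions of a list commute.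
-/

section Reparo

variable {TX St : Type}

/-- Replace the transactions of block `j` (leaving the recorded state to be
recomputed). -/
def setTx : List (TX × St) → ℕ → TX → List (TX × St)
  | [], _, _ => []
  | b :: rest, 0, t => (t, b.2) :: rest
  | b :: rest, n + 1, t => b :: setTx rest n t

/-- Recompute all states of the chain from a previous state via `δ`. -/
def restate (δ : St → TX → St) : St → List (TX × St) → List (TX × St)
  | _, [] => []
  | s, (t, _) :: rest =>
    let s' := δ s t
    (t, s') :: restate δ s' rest

/-- `repairChain`: replace block `j`'s transactions by the proposal's
transactions and recompute all subsequent states via `δ`. -/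
def repairChain (δ : St → TX → St) (s0 : St)
    (C : List (TX × St)) (j : ℕ) (t : TX) : List (TX × St) :=
  restate δ s0 (setTx C j t)

lemma map_fst_restate (δ : St → TX → St) (s : St) (L : List (TX × St)) :
    (restate δ s L).map Prod.fst = L.map Prod.fst := by
  induction L generalizing s with
  | nil => rfl
  | cons b rest ih => simp [restate, ih]

lemma map_fst_setTx (L : List (TX × St)) (j : ℕ) (t : TX) :
    (setTx L j t).map Prod.fst = (L.map Prod.fst).set j t := by
  induction L generalizing j with
  | nil => rfl
  | cons b rest ih =>
    cases j with
    | zero => rfl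
    | succ n => simp [setTx, ih]

lemma map_fst_repairChain (δ : St → TX → St) (s0 : St) (C : List (TX × St)) (j : ℕ)
    (t : TX) : (repairChain δ s0 C j t).map Prod.fst = (C.map Prod.fst).set j t := by
  rw [repairChain, map_fst_restate, map_fst_setTx]

lemma restate_eq_of_map_fst_eq (δ : St → TX → St) (s : St) {L M : List (TX × St)}
    (h : L.map Prod.fst = M.map Prod.fst) : restate δ s L = restate δ s M := by
  induction L generalizing s M with
  | nil => cases M <;> simp_all
  | cons b rest ih =>
    obtain _ | ⟨c, restM⟩ := M
    · simp at h
    · obtain ⟨hbc, hrest⟩ := List.cons_eq_cons.mp h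
      simp [restate, hbc, ih _ hrest]

/-- Repairs targeting distinct blocks are order-independent: applying the
repairs for blocks `i` and `j` (with `i < j`, the proposal for `j` computed
relative to the chain already repaired at `i`, its state being recomputed via
`δ`) in either order yields the same final chain. -/
theorem repairs_commute
    (δ : St → TX → St) (s0 : St) (C : List (TX × St))
    (i j : ℕ) (hij : i < j) (ti tj : TX) :
    repairChain δ s0 (repairChain δ s0 C i ti) j tj
      = repairChain δ s0 (repairChain δ s0 C j tj) i ti := by
  apply restate_eq_of_map_fst_eq
  rw [map_fst_setTx, map_fst_setTx, map_fst_repairChain, map_fst_repairChain]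
  exact List.set_comm _ _ hij.ne

end Reparo
end

section
/- Chain reconstruction from the repair layer is an involution-like inverse of repairing: for any chain C and repair layer Rdb produced by a sequence of repairChain operations starting from an unrepaired chain C_org (with initially empty Rdb), the reconstruction step of validateChain (replacing each block's contents by the corresponding non-empty Rdb entry) recovers exactly C_org. -/
section Reparo

variable {κ : Type}

/-- Reconstruction from the repair layer: wherever the repair layer has a
(non-empty) entry, restore the stored original contents. -/
def reconstruct (C : List κ) (Rdb : List (Option κ)) : List κ :=
  List.zipWith (fun c o => o.getD c) C Rdb

/-- `Reached Corg C Rdb` holds when `(C, Rdb)` is obtained from the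
unrepaired chain `Corg` (with initially empty repair layer) by a sequence of
`repairChain` operations: each repair replaces the contents of some block `j`
and stores the block's current contents in `Rdb_j` only if `Rdb_j` is still
empty (preserving the original contents across multiple repairs of the same
block). -/
inductive Reached (Corg : List κ) : List κ → List (Option κ) → Prop
  | base : Reached Corg Corg (List.replicate Corg.length none)
  | step {C : List κ} {Rdb : List (Option κ)} (j : ℕ) (c' : κ)
      (hprev : Reached Corg C Rdb) (hj : j < C.length) :
      Reached Corg (C.set j c')
        (if (Rdb.getD j none).isNone then Rdb.set j (some (C[j]'hj)) else Rdb)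

lemma reconstruct_replicate_none (l : List κ) :
    reconstruct l (List.replicate l.length none) = l := by
  induction l with
  | nil => rfl
  | cons a t ih => simpa [reconstruct, List.replicate_succ] using ih

lemma Reached.length_eq {Corg C : List κ} {Rdb : List (Option κ)}
    (h : Reached Corg C Rdb) : Rdb.length = C.length := by
  induction h with
  | base => simp
  | step j c' hprev hj ih => split <;> simp [ih]

lemma reconstruct_set {C : List κ} {Rdb : List (Option κ)} (j : ℕ) (c' : κ)
    (hj : j < C.length) (hlen : Rdb.length = C.length) :
    reconstruct (C.set j c')
      (if (Rdb.getD j none).isNone then Rdb.set j (some (C[j]'hj)) else Rdb)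
      = reconstruct C Rdb := by
  have hj' : j < Rdb.length := hlen ▸ hj
  rw [List.getD_eq_getElem Rdb none hj']
  apply List.ext_getElem
  · split <;> simp [reconstruct, hlen]
  · intro i hi1 hi2
    split
    next hcase =>
      simp only [reconstruct, List.getElem_zipWith, List.getElem_set]
      by_cases hij : j = i
      · subst hij
        simp [Option.isNone_iff_eq_none.mp hcase]
      · simp [hij]
    next hcase =>
      simp only [reconstruct, List.getElem_zipWith, List.getElem_set]
      by_cases hij : j = i
      · subst hij
        obtain ⟨x, hx⟩ : ∃ x, Rdb[j] = some x := by
          cases hv : Rdb[j] with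
          | none => exact absurd (by simp [hv]) hcase
          | some x => exact ⟨x, rfl⟩
        simp [hx]
      · simp [hij]

/-- Reconstruction inverts repairing: for any `(C, Rdb)` produced by a
sequence of repairs starting from `Corg`, reconstruction recovers exactly
`Corg`. -/
theorem reconstruct_recovers_original
    (Corg C : List κ) (Rdb : List (Option κ))
    (h : Reached Corg C Rdb) :
    reconstruct C Rdb = Corg := by
  induction h with
  | base => exact reconstruct_replicate_none Corg
  | step j c' hprev hj ih =>
    rw [reconstruct_set j c' hj hprev.length_eq, ih]

end Reparo
end
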